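/- Let G = (V,E) be a finite connected simple graph and let w₁, w₂ : E → ℝ be injective edge-weight functions with w₁(e) ≤ w₂(e) for all e ∈ E; let E⁺ = { e ∈ E : w₂(e) > w₁(e) }. Let T₁ be a minimum-weight spanning tree of G with respect to w₁ and set F = T₁ \ E⁺ (a forest). Let A* ⊆ E be a set of edges such that F ∪ A* is a spanning tree of G and w₂(A*) ≤ w₂(A) for every A ⊆ E such that F ∪ A is a spanning tree of G. Then F ∪ A* is a minimum-weight spanning tree of G with respect to w₂. -/

import Mathlib

/-- The edge set `S` is acyclic: the graph `(V, S)` contains no cycle. -/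
def EdgesAcyclic {V : Type*} (S : Finset (Sym2 V)) : Prop :=
  (SimpleGraph.fromEdgeSet (S : Set (Sym2 V))).IsAcyclic

/-- The edge set `S` spans a connected graph `(V, S)` on the whole vertex set. -/
def EdgesConnected {V : Type*} (S : Finset (Sym2 V)) : Prop :=
  (SimpleGraph.fromEdgeSet (S : Set (Sym2 V))).Connected

/-- `T` is a spanning tree of `G`: a subset of the edges of `G` such that the
subgraph `(V, T)` is connected and acyclic. -/
def IsSpanningTree {V : Type*} (G : SimpleGraph V) (T : Finset (Sym2 V)) : Prop :=
  (T : Set (Sym2 V)) ⊆ G.edgeSet ∧ EdgesConnected T ∧ EdgesAcyclic T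

/-- The weight of an edge set: `w(S) = ∑_{e ∈ S} w(e)`. -/
def wsum {V : Type*} (w : Sym2 V → ℝ) (S : Finset (Sym2 V)) : ℝ := ∑ e ∈ S, w e

/-- `T` is a minimum-weight spanning tree of `G` with respect to `w`. -/
def IsMST {V : Type*} (G : SimpleGraph V) (w : Sym2 V → ℝ) (T : Finset (Sym2 V)) : Prop :=
  IsSpanningTree G T ∧ ∀ T' : Finset (Sym2 V), IsSpanningTree G T' → wsum w T ≤ wsum w T'

/-!
An edge `e ∈ T₁` whose weight does not increase lies in every `w₂`-minimum spanning tree `T₂`: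
otherwise the symmetric exchange property of spanning trees gives `f ∈ T₂ \ T₁` such that both
`T₁ - e + f` and `T₂ - f + e` are spanning trees, whence `w₁ e < w₁ f ≤ w₂ f ≤ w₂ e = w₁ e`, the
first inequality being strict because `w₁` is injective. Hence `F ⊆ T₂`, so `T₂ = F ∪ A` for
`A = (T₂ \ F) ∪ (A* ∩ F)`, and the minimality of `A*` against this `A` gives `w₂(F ∪ A*) ≤ w₂(T₂)`.
-/

open SimpleGraph

namespace SimpleGraph

variable {V : Type*} {H : SimpleGraph V}

theorem Walk.reachable_deleteEdges_or {x y : V} (p : H.Walk x y) (a b : V) :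
    (H.deleteEdges {s(a, b)}).Reachable x y ∨ (H.deleteEdges {s(a, b)}).Reachable x a ∨
      (H.deleteEdges {s(a, b)}).Reachable x b := by
  induction p with
  | nil => exact Or.inl .rfl
  | @cons x z _ hxz _ ih =>
    by_cases hf : s(x, z) = s(a, b)
    · rcases Sym2.eq_iff.mp hf with ⟨rfl, -⟩ | ⟨rfl, -⟩
      exacts [Or.inr (Or.inl .rfl), Or.inr (Or.inr .rfl)]
    · have hK : (H.deleteEdges {s(a, b)}).Adj x z := by simp [hxz, hf]
      exact ih.imp hK.reachable.trans (Or.imp hK.reachable.trans hK.reachable.trans)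

theorem Connected.sup_edge_deleteEdges (hH : H.Connected) {a b u v : V}
    (huv : ¬ (H.deleteEdges {s(a, b)}).Reachable u v) :
    (H.deleteEdges {s(a, b)} ⊔ edge u v).Connected := by
  set K := H.deleteEdges {s(a, b)}
  have hKle : K ≤ K ⊔ edge u v := le_sup_left
  have hside (x : V) : K.Reachable x a ∨ K.Reachable x b :=
    or_self_left.mp ((hH.preconnected x a).some.reachable_deleteEdges_or a b)
  have hne : u ≠ v := by rintro rfl; exact huv .rfl
  have huv' : (K ⊔ edge u v).Reachable u v := Adj.reachable (Or.inr (by simp [edge_adj, hne]))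
  have hab : (K ⊔ edge u v).Reachable a b := by
    rcases hside u with hu | hu <;> rcases hside v with hv | hv
    · exact absurd (hu.trans hv.symm) huv
    · exact (hu.mono hKle).symm.trans (huv'.trans (hv.mono hKle))
    · exact (hv.mono hKle).symm.trans (huv'.symm.trans (hu.mono hKle))
    · exact absurd (hu.trans hv.symm) huv
  have := hH.nonempty
  refine ⟨fun x y => ?_⟩
  rcases hside x with hx | hx <;> rcases hside y with hy | hy
  · exact (hx.trans hy.symm).mono hKle
  · exact (hx.mono hKle).trans (hab.trans (hy.mono hKle).symm)
  · exact (hx.mono hKle).trans (hab.symm.trans (hy.mono hKle).symm)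
  · exact (hx.trans hy.symm).mono hKle

theorem IsTree.sup_edge_deleteEdges (hH : H.IsTree) {f : Sym2 V} {u v : V}
    (huv : ¬ (H.deleteEdges {f}).Reachable u v) : (H.deleteEdges {f} ⊔ edge u v).IsTree := by
  induction f with
  | h a b => exact ⟨hH.connected.sup_edge_deleteEdges huv,
      (hH.isAcyclic.anti (deleteEdges_le _)).sup_edge_of_not_reachable huv⟩

theorem IsAcyclic.not_reachable_deleteEdges_of_mem_edges (hH : H.IsAcyclic) {u v : V}
    {p : H.Walk u v} (hp : p.IsPath) {f : Sym2 V} (hf : f ∈ p.edges) :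
    ¬ (H.deleteEdges {f}).Reachable u v := by
  intro h
  obtain ⟨q, hq⟩ := h.exists_isPath
  have hpq : p = q.mapLe (deleteEdges_le {f}) :=
    congrArg Subtype.val ((hH.subsingleton_path u v).elim ⟨p, hp⟩ ⟨_, hq.mapLe _⟩)
  rw [hpq, Walk.edges_mapLe_eq_edges] at hf
  simpa using q.edges_subset_edgeSet hf

end SimpleGraph

section SpanningTree

variable {V : Type*} {G : SimpleGraph V}

theorem isSpanningTree_iff {T : Finset (Sym2 V)} :
    IsSpanningTree G T ↔
      (T : Set (Sym2 V)) ⊆ G.edgeSet ∧ (fromEdgeSet (T : Set (Sym2 V))).IsTree :=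
  ⟨fun ⟨hsub, hconn, hacyc⟩ => ⟨hsub, hconn, hacyc⟩,
    fun ⟨hsub, hconn, hacyc⟩ => ⟨hsub, hconn, hacyc⟩⟩

variable [DecidableEq V]

theorem fromEdgeSet_coe_erase (T : Finset (Sym2 V)) (f : Sym2 V) :
    fromEdgeSet ((T.erase f : Finset (Sym2 V)) : Set (Sym2 V)) =
      (fromEdgeSet (T : Set (Sym2 V))).deleteEdges {f} := by
  rw [Finset.coe_erase, deleteEdges_fromEdgeSet]

theorem fromEdgeSet_coe_insert (T : Finset (Sym2 V)) (u v : V) :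
    fromEdgeSet ((insert s(u, v) T : Finset (Sym2 V)) : Set (Sym2 V)) =
      fromEdgeSet (T : Set (Sym2 V)) ⊔ edge u v := by
  rw [Finset.coe_insert, Set.insert_eq, Set.union_comm, fromEdgeSet_union, edge]

theorem IsSpanningTree.insert_erase {T : Finset (Sym2 V)} (hT : IsSpanningTree G T)
    {f : Sym2 V} {u v : V} (he : s(u, v) ∈ G.edgeSet)
    (huv : ¬ (fromEdgeSet ((T.erase f : Finset (Sym2 V)) : Set (Sym2 V))).Reachable u v) :
    IsSpanningTree G (insert s(u, v) (T.erase f)) := by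
  rw [isSpanningTree_iff] at hT ⊢
  rw [fromEdgeSet_coe_erase] at huv
  refine ⟨?_, ?_⟩
  · rw [Finset.coe_insert, Finset.coe_erase]
    exact Set.insert_subset he (Set.sdiff_subset.trans hT.1)
  · rw [fromEdgeSet_coe_insert, fromEdgeSet_coe_erase]
    exact hT.2.sup_edge_deleteEdges huv

theorem IsSpanningTree.exists_symm_exchange {T₁ T₂ : Finset (Sym2 V)} (hT₁ : IsSpanningTree G T₁)
    (hT₂ : IsSpanningTree G T₂) {e : Sym2 V} (he₁ : e ∈ T₁) (he₂ : e ∉ T₂) :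
    ∃ f ∈ T₂, f ∉ T₁ ∧ IsSpanningTree G (insert f (T₁.erase e)) ∧
      IsSpanningTree G (insert e (T₂.erase f)) := by
  induction e with | h u v => ?_
  set K := fromEdgeSet ((T₁.erase s(u, v) : Finset (Sym2 V)) : Set (Sym2 V))
  have hsep : ¬ K.Reachable u v := by
    have hadj : (fromEdgeSet (T₁ : Set (Sym2 V))).Adj u v := by
      simpa [he₁] using (hT₁.1 he₁ : G.Adj u v).ne
    have hbridge := isAcyclic_iff_forall_adj_isBridge.mp hT₁.2.2 hadj
    rwa [isBridge_iff, ← fromEdgeSet_coe_erase] at hbridge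
  obtain ⟨p, hp⟩ := Connected.exists_isPath hT₂.2.1 u v
  -- `f` is the edge where the `T₂`-path from `u` to `v` leaves the component of `u` in `T₁ - e`.
  obtain ⟨⟨⟨a, b⟩, hab⟩, hd, ha, hb⟩ := p.exists_boundary_dart {x | K.Reachable u x} .rfl hsep
  have hsep' : ¬ K.Reachable a b := fun h => hb (ha.trans h)
  have hf₂ : s(a, b) ∈ T₂ := ((fromEdgeSet_adj _).mp hab).1
  have hf₁ : s(a, b) ∉ T₁ := by
    intro hf₁
    have hfe : s(a, b) ≠ s(u, v) := fun h => he₂ (h ▸ hf₂)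
    exact hsep' (Adj.reachable (by simpa [K, hf₁, hfe] using hab.ne))
  refine ⟨s(a, b), hf₂, hf₁, hT₁.insert_erase (hT₂.1 hf₂) hsep', hT₂.insert_erase (hT₁.1 he₁) ?_⟩
  rw [fromEdgeSet_coe_erase]
  exact hT₂.2.2.not_reachable_deleteEdges_of_mem_edges hp (List.mem_map_of_mem hd)

end SpanningTree

section Weights

variable {V : Type*} {G : SimpleGraph V}

theorem exists_isMST [Finite V] (w : Sym2 V → ℝ) {T : Finset (Sym2 V)}
    (hT : IsSpanningTree G T) : ∃ T', IsMST G w T' := by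
  obtain ⟨T', hT', hmin⟩ :=
    Set.exists_min_image {T | IsSpanningTree G T} (wsum w) (Set.toFinite _) ⟨T, hT⟩
  exact ⟨T', hT', hmin⟩

variable [DecidableEq V]

theorem wsum_insert_erase (w : Sym2 V → ℝ) {T : Finset (Sym2 V)} {e f : Sym2 V} (he : e ∈ T)
    (hf : f ∉ T) : wsum w (insert f (T.erase e)) = wsum w T - w e + w f := by
  have hf' : f ∉ T.erase e := fun h => hf (Finset.mem_of_mem_erase h)
  rw [wsum, wsum, Finset.sum_insert hf', ← Finset.sum_erase_add T w he]
  ring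

theorem IsMST.le_of_exchange {w : Sym2 V → ℝ} {T : Finset (Sym2 V)} (hT : IsMST G w T)
    {e f : Sym2 V} (he : e ∈ T) (hf : f ∉ T) (hT' : IsSpanningTree G (insert f (T.erase e))) :
    w e ≤ w f := by
  have := hT.2 _ hT'
  rw [wsum_insert_erase w he hf] at this
  linarith

theorem IsMST.mem_of_weight_le {w₁ w₂ : Sym2 V → ℝ} (hw₁ : Set.InjOn w₁ G.edgeSet)
    (hle : ∀ e ∈ G.edgeSet, w₁ e ≤ w₂ e) {T₁ T₂ : Finset (Sym2 V)} (hT₁ : IsMST G w₁ T₁)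
    (hT₂ : IsMST G w₂ T₂) {e : Sym2 V} (he : e ∈ T₁) (hwe : w₂ e ≤ w₁ e) : e ∈ T₂ := by
  by_contra he₂
  obtain ⟨f, hf₂, hf₁, hT₁', hT₂'⟩ := hT₁.1.exists_symm_exchange hT₂.1 he he₂
  have hlt : w₁ e < w₁ f := (hT₁.le_of_exchange he hf₁ hT₁').lt_of_ne fun h =>
    ne_of_mem_of_not_mem hf₂ he₂ (hw₁ (hT₂.1.1 hf₂) (hT₁.1.1 he) h.symm)
  linarith [hT₂.le_of_exchange hf₂ he₂ hT₂', hle f (hT₂.1.1 hf₂)]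

theorem wsum_union_le_of_subset (w : Sym2 V → ℝ) {F A T : Finset (Sym2 V)} (hFT : F ⊆ T)
    (hA : wsum w A ≤ wsum w (T \ F ∪ A ∩ F)) : wsum w (F ∪ A) ≤ wsum w T := by
  have hdisj : Disjoint (T \ F) (A ∩ F) :=
    Finset.sdiff_disjoint.mono_right Finset.inter_subset_right
  have h₁ := Finset.sum_union_inter (s₁ := F) (s₂ := A) (f := w)
  have h₂ := Finset.sum_union hdisj (f := w)
  have h₃ := Finset.sum_sdiff hFT (f := w)
  simp only [wsum, Finset.inter_comm F A] at *
  linarith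

end Weights

theorem stmt_7_general {V : Type*} [Fintype V] [DecidableEq V] (G : SimpleGraph V)
    (w₁ w₂ : Sym2 V → ℝ)
    (hw₁ : Set.InjOn w₁ G.edgeSet)
    (hle : ∀ e ∈ G.edgeSet, w₁ e ≤ w₂ e)
    (Eplus : Finset (Sym2 V)) (hEp : ∀ e, e ∈ Eplus ↔ e ∈ G.edgeSet ∧ w₁ e < w₂ e)
    (T₁ : Finset (Sym2 V)) (hT₁ : IsMST G w₁ T₁)
    (Astar : Finset (Sym2 V)) (hAsub : (Astar : Set (Sym2 V)) ⊆ G.edgeSet)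
    (hAst : IsSpanningTree G ((T₁ \ Eplus) ∪ Astar))
    (hAmin : ∀ A : Finset (Sym2 V), (A : Set (Sym2 V)) ⊆ G.edgeSet →
      IsSpanningTree G ((T₁ \ Eplus) ∪ A) → wsum w₂ Astar ≤ wsum w₂ A) :
    IsMST G w₂ ((T₁ \ Eplus) ∪ Astar) := by
  set F := T₁ \ Eplus
  obtain ⟨T₂, hT₂⟩ := exists_isMST w₂ hAst
  have hFT₂ : F ⊆ T₂ := fun e he => by
    obtain ⟨heT₁, heE⟩ := Finset.mem_sdiff.mp he
    exact hT₁.mem_of_weight_le hw₁ hle hT₂ heT₁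
      (not_lt.mp fun h => heE ((hEp e).mpr ⟨hT₁.1.1 heT₁, h⟩))
  have hA : ((T₂ \ F ∪ Astar ∩ F : Finset (Sym2 V)) : Set (Sym2 V)) ⊆ G.edgeSet := by
    rw [Finset.coe_union]
    exact Set.union_subset (fun e he => hT₂.1.1 (Finset.mem_sdiff.mp he).1)
      (fun e he => hAsub (Finset.mem_inter.mp he).1)
  have hFA : F ∪ (T₂ \ F ∪ Astar ∩ F) = T₂ := by
    rw [← Finset.union_assoc, Finset.union_sdiff_of_subset hFT₂,
      Finset.union_eq_left.mpr (Finset.inter_subset_right.trans hFT₂)]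
  refine ⟨hAst, fun T' hT' => (wsum_union_le_of_subset w₂ hFT₂ ?_).trans (hT₂.2 T' hT')⟩
  exact hAmin _ hA (by rw [hFA]; exact hT₂.1)

/-- Let `w₁ ≤ w₂` be injective edge weights on a finite connected simple
graph, `E⁺ = { e : w₂(e) > w₁(e) }`, `T₁` an MST for `w₁`, `F = T₁ \ E⁺`. If `A*` is a
set of edges such that `F ∪ A*` is a spanning tree, of `w₂`-weight at most that of any
`A ⊆ E` with `F ∪ A` a spanning tree, then `F ∪ A*` is an MST for `w₂`. -/
theorem stmt_7 {V : Type*} [Fintype V] [DecidableEq V] (G : SimpleGraph V)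
    (hG : G.Connected) (w₁ w₂ : Sym2 V → ℝ)
    (hw₁ : Set.InjOn w₁ G.edgeSet) (hw₂ : Set.InjOn w₂ G.edgeSet)
    (hle : ∀ e ∈ G.edgeSet, w₁ e ≤ w₂ e)
    (Eplus : Finset (Sym2 V)) (hEp : ∀ e, e ∈ Eplus ↔ e ∈ G.edgeSet ∧ w₁ e < w₂ e)
    (T₁ : Finset (Sym2 V)) (hT₁ : IsMST G w₁ T₁)
    (Astar : Finset (Sym2 V)) (hAsub : (Astar : Set (Sym2 V)) ⊆ G.edgeSet)
    (hAst : IsSpanningTree G ((T₁ \ Eplus) ∪ Astar))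
    (hAmin : ∀ A : Finset (Sym2 V), (A : Set (Sym2 V)) ⊆ G.edgeSet →
      IsSpanningTree G ((T₁ \ Eplus) ∪ A) → wsum w₂ Astar ≤ wsum w₂ A) :
    IsMST G w₂ ((T₁ \ Eplus) ∪ Astar) :=
  stmt_7_general G w₁ w₂ hw₁ hle Eplus hEp T₁ hT₁ Astar hAsub hAst hAmin
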